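/- arXiv:1810.00391 — 10 statements merged into one kernel-verified Lean document; each statement's English description precedes it below -/
import Mathlib

section
/- For any positive real number x, the negative logarithm admits the integral representation: -log x = ∫₀^∞ (1/(t+x) - t/(t²+1)) dt. -/
/-!
The integrand is the derivative of `F t = log (t + x) - log (t ^ 2 + 1) / 2`, i.e. of
`log ((t + x) / √(t ^ 2 + 1))`, which tends to `log 1 = 0` at infinity. The integrand is
`(1 - t x) / ((t + x) (t ^ 2 + 1)) = O(1 / (1 + t ^ 2))`, hence integrable, and the fundamental
theorem of calculus on `(0, ∞)` gives `0 - F 0 = -log x`.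
-/

open MeasureTheory Set Filter Topology

lemma hasDerivAt_log_add_sub_half_log_sq_add_one {x t : ℝ} (ht : t + x ≠ 0) :
    HasDerivAt (fun s => Real.log (s + x) - Real.log (s ^ 2 + 1) / 2)
      (1 / (t + x) - t / (t ^ 2 + 1)) t := by
  have hlin : HasDerivAt (fun s : ℝ => s + x) 1 t := (hasDerivAt_id t).add_const x
  have hquad : HasDerivAt (fun s : ℝ => s ^ 2 + 1) (2 * t) t := by
    simpa using (hasDerivAt_pow 2 t).add_const 1
  refine ((hlin.log ht).sub ((hquad.log (by positivity)).div_const 2)).congr_deriv ?_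
  ring

lemma tendsto_log_add_sub_half_log_sq_add_one_atTop (x : ℝ) :
    Tendsto (fun t => Real.log (t + x) - Real.log (t ^ 2 + 1) / 2) atTop (𝓝 0) := by
  have hu : Tendsto (fun t : ℝ => 1 + x / t) atTop (𝓝 1) := by
    simpa using (tendsto_const_nhds (x := (1 : ℝ))).add
      (tendsto_const_nhds.div_atTop tendsto_id)
  have hv : Tendsto (fun t : ℝ => 1 + 1 / t ^ 2) atTop (𝓝 1) := by
    simpa using (tendsto_const_nhds (x := (1 : ℝ))).add
      ((tendsto_const_nhds (x := (1 : ℝ))).div_atTop (tendsto_pow_atTop two_ne_zero))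
  -- Factor out `t` and `t ^ 2`: the `log t` terms cancel.
  have hsplit : ∀ᶠ t : ℝ in atTop, Real.log (1 + x / t) - Real.log (1 + 1 / t ^ 2) / 2
      = Real.log (t + x) - Real.log (t ^ 2 + 1) / 2 := by
    filter_upwards [eventually_gt_atTop 0, hu.eventually_ne one_ne_zero] with t ht hut
    have ht2 : t ^ 2 ≠ 0 := by positivity
    have hvt : 1 + 1 / t ^ 2 ≠ 0 := by positivity
    rw [show t + x = t * (1 + x / t) by field_simp,
      show t ^ 2 + 1 = t ^ 2 * (1 + 1 / t ^ 2) by field_simp,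
      Real.log_mul ht.ne' hut, Real.log_mul ht2 hvt, Real.log_pow]
    ring
  have hlim := (Real.continuousAt_log one_ne_zero).tendsto.comp hu |>.sub
    (((Real.continuousAt_log one_ne_zero).tendsto.comp hv).div_const 2)
  simpa using hlim.congr' hsplit

lemma abs_one_div_add_sub_div_sq_add_one_le {x t : ℝ} (hx : 0 < x) (ht : 0 ≤ t) :
    |1 / (t + x) - t / (t ^ 2 + 1)| ≤ (x⁻¹ + x) * (1 + t ^ 2)⁻¹ := by
  have htx : 0 < t + x := by linarith
  have hsq : 0 < t ^ 2 + 1 := by positivity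
  have hidentity : 1 / (t + x) - t / (t ^ 2 + 1) = (1 - t * x) / (t + x) / (t ^ 2 + 1) := by
    field_simp
    ring
  have hnum : |1 - t * x| ≤ 1 + t * x := abs_le.mpr ⟨by nlinarith, by nlinarith⟩
  have hfirst : (1 + t * x) / (t + x) ≤ x⁻¹ + x := by
    rw [div_le_iff₀ htx]
    have : x⁻¹ * x = 1 := inv_mul_cancel₀ hx.ne'
    nlinarith [mul_nonneg ht (inv_pos.mpr hx).le, sq_nonneg x]
  rw [hidentity, abs_div, abs_div, abs_of_pos htx, abs_of_pos hsq, div_eq_mul_inv _ (t ^ 2 + 1),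
    add_comm (t ^ 2)]
  gcongr
  exact (div_le_div_of_nonneg_right hnum htx.le).trans hfirst

lemma integrableOn_one_div_add_sub_div_sq_add_one {x : ℝ} (hx : 0 < x) :
    IntegrableOn (fun t => 1 / (t + x) - t / (t ^ 2 + 1)) (Ioi 0) := by
  refine Integrable.mono' (integrable_inv_one_add_sq.integrableOn.const_mul (x⁻¹ + x))
    (Measurable.aestronglyMeasurable (by fun_prop)) ?_
  filter_upwards [ae_restrict_mem measurableSet_Ioi] with t ht
  exact abs_one_div_add_sub_div_sq_add_one_le hx (le_of_lt ht)

theorem neg_log_integral_repr (x : ℝ) (hx : 0 < x) :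
    -Real.log x = ∫ t in Set.Ioi (0 : ℝ), (1 / (t + x) - t / (t ^ 2 + 1)) := by
  rw [integral_Ioi_of_hasDerivAt_of_tendsto'
    (fun t ht => hasDerivAt_log_add_sub_half_log_sq_add_one (by linarith [ht.out]))
    (integrableOn_one_div_add_sub_div_sq_add_one hx)
    (tendsto_log_add_sub_half_log_sq_add_one_atTop x)]
  simp
end

section
/- For p ∈ (0,1) and any x > 0, one has -x^p = -cos(pπ/2) + (sin(pπ)/π) ∫₀^∞ t^p (1/(t+x) - t/(t²+1)) dt. -/
open MeasureTheory Real Set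

/-!
Writing `t ^ p * (1 / (t + x) - t / (t ^ 2 + 1))` as
`t ^ (p - 1) / (t ^ 2 + 1) - x * (t ^ (p - 1) / (t + x))`, both pieces are rescalings
(`t ↦ x * t` and `t ↦ t ^ 2`) of the Beta integral
`∫₀^∞ t ^ (a - 1) / (1 + t) dt = Γ(a) Γ(1 - a) = π / sin (π a)`, obtained by inserting
`1 / (1 + t) = ∫₀^∞ exp (-u (1 + t)) du` and swapping the integrals. The substitutions need
no integrability, and a function whose integral is nonzero is integrable, so no growth
estimates are required. Finally `sin (p π) / π` turns the two values into `cos (p π / 2)`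
and `x ^ p`.
-/

lemma integral_Ioi_rpow_div_one_add {a : ℝ} (ha₀ : 0 < a) (ha₁ : a < 1) :
    ∫ t in Ioi (0 : ℝ), t ^ (a - 1) / (1 + t) = π / sin (π * a) := by
  rw [← Gamma_mul_Gamma_one_sub]
  set F : ℝ → ℝ → ℝ := fun t u => t ^ (a - 1) * exp (-(u * (1 + t)))
  have h_inner (t : ℝ) (ht : 0 < t) : ∫ u in Ioi (0 : ℝ), F t u = t ^ (a - 1) / (1 + t) := by
    have h := integral_rpow_mul_exp_neg_mul_Ioi one_pos (show 0 < 1 + t by linarith)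
    simp only [sub_self, rpow_zero, one_mul, one_div, rpow_one, Gamma_one,
      mul_one] at h
    simp only [F, integral_const_mul, mul_comm _ (1 + t), h, div_eq_mul_inv]
  have h_outer (u : ℝ) (hu : 0 < u) :
      ∫ t in Ioi (0 : ℝ), F t u = Gamma a * (u ^ (1 - a - 1) * exp (-(1 * u))) := by
    have hF : ∀ t, F t u = t ^ (a - 1) * exp (-(u * t)) * exp (-u) := fun t => by
      simp only [F, mul_add, mul_one, neg_add, exp_add]; ring
    simp only [hF, integral_mul_const, integral_rpow_mul_exp_neg_mul_Ioi ha₀ hu]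
    rw [one_div, inv_rpow hu.le, ← rpow_neg hu.le]
    ring_nf
  have h_gamma : ∫ u in Ioi (0 : ℝ), u ^ (1 - a - 1) * exp (-(1 * u)) = Gamma (1 - a) := by
    simpa using integral_rpow_mul_exp_neg_mul_Ioi (sub_pos.2 ha₁) one_pos
  have h_int : Integrable (Function.uncurry F)
      ((volume.restrict (Ioi 0)).prod (volume.restrict (Ioi 0))) := by
    rw [integrable_prod_iff' (by fun_prop : Measurable (Function.uncurry F)).aestronglyMeasurable]
    refine ⟨?_, ?_⟩
    · filter_upwards [ae_restrict_mem measurableSet_Ioi] with u (hu : 0 < u)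
      refine Integrable.of_integral_ne_zero ?_
      simp only [Function.uncurry_apply_pair, h_outer u hu]
      exact (mul_pos (Gamma_pos_of_pos ha₀) (by positivity)).ne'
    · have h_norm :
          ∀ u ∈ Ioi (0 : ℝ), ∫ t in Ioi (0 : ℝ), ‖F t u‖ = ∫ t in Ioi (0 : ℝ), F t u :=
        fun u _ => setIntegral_congr_fun measurableSet_Ioi fun t (ht : 0 < t) =>
          norm_of_nonneg (by positivity)
      refine Integrable.of_integral_ne_zero ?_
      simp only [Function.uncurry_apply_pair]
      rw [setIntegral_congr_fun measurableSet_Ioi h_norm,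
        setIntegral_congr_fun measurableSet_Ioi h_outer, integral_const_mul, h_gamma]
      exact mul_ne_zero (Gamma_pos_of_pos ha₀).ne' (Gamma_pos_of_pos (by linarith)).ne'
  calc ∫ t in Ioi (0 : ℝ), t ^ (a - 1) / (1 + t)
      = ∫ t in Ioi (0 : ℝ), ∫ u in Ioi (0 : ℝ), F t u :=
        setIntegral_congr_fun measurableSet_Ioi fun t ht => (h_inner t ht).symm
    _ = ∫ u in Ioi (0 : ℝ), ∫ t in Ioi (0 : ℝ), F t u := integral_integral_swap h_int
    _ = ∫ u in Ioi (0 : ℝ), Gamma a * (u ^ (1 - a - 1) * exp (-(1 * u))) :=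
        setIntegral_congr_fun measurableSet_Ioi fun u hu => h_outer u hu
    _ = Gamma a * Gamma (1 - a) := by rw [integral_const_mul, h_gamma]

lemma integral_Ioi_rpow_div_add {p x : ℝ} (hp₀ : 0 < p) (hp₁ : p < 1) (hx : 0 < x) :
    ∫ t in Ioi (0 : ℝ), t ^ (p - 1) / (t + x) = x ^ (p - 1) * (π / sin (π * p)) := by
  have h := integral_comp_mul_left_Ioi' (fun t : ℝ => t ^ (p - 1) / (t + x)) 0 hx
  rw [mul_zero] at h
  rw [← h, ← integral_Ioi_rpow_div_one_add hp₀ hp₁, smul_eq_mul, ← integral_const_mul,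
    ← integral_const_mul]
  refine setIntegral_congr_fun measurableSet_Ioi fun u (hu : 0 < u) => ?_
  rw [mul_rpow hx.le hu.le, show x * u + x = x * (1 + u) by ring,
    show x ^ (p - 1) = x ^ (p - 2) * x by rw [← rpow_add_one hx.ne']; ring_nf]
  field_simp

lemma integral_Ioi_rpow_div_sq_add_one {p : ℝ} (hp₀ : 0 < p) (hp₁ : p < 1) :
    ∫ t in Ioi (0 : ℝ), t ^ (p - 1) / (t ^ 2 + 1) = π / (2 * sin (π * (p / 2))) := by
  have h := integral_comp_rpow_Ioi_of_pos (g := fun y : ℝ => y ^ (p / 2 - 1) / (1 + y)) two_pos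
  rw [integral_Ioi_rpow_div_one_add (by linarith) (by linarith)] at h
  rw [div_mul_eq_div_div_swap, ← h, eq_div_iff two_ne_zero, ← integral_mul_const]
  refine setIntegral_congr_fun measurableSet_Ioi fun t (ht : 0 < t) => ?_
  rw [smul_eq_mul, ← rpow_mul ht.le, rpow_two, show (2 : ℝ) - 1 = 1 by norm_num, rpow_one,
    show 2 * (p / 2 - 1) = (p - 1) - 1 by ring, rpow_sub_one ht.ne' (p - 1)]
  field_simp
  ring

theorem neg_rpow_integral_repr (p x : ℝ) (hp : p ∈ Set.Ioo (0 : ℝ) 1) (hx : 0 < x) :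
    -x ^ p = -Real.cos (p * Real.pi / 2) +
      (Real.sin (p * Real.pi) / Real.pi) *
        ∫ t in Set.Ioi (0 : ℝ), t ^ p * (1 / (t + x) - t / (t ^ 2 + 1)) := by
  obtain ⟨hp₀, hp₁⟩ := hp
  have h_split : ∀ t ∈ Ioi (0 : ℝ), t ^ p * (1 / (t + x) - t / (t ^ 2 + 1))
      = t ^ (p - 1) / (t ^ 2 + 1) - x * (t ^ (p - 1) / (t + x)) := fun t (ht : 0 < t) => by
    rw [rpow_sub_one ht.ne']
    field_simp
    ring
  have h_sin : 0 < sin (π * p) := sin_pos_of_pos_of_lt_pi (by positivity) (by nlinarith [pi_pos])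
  have h_sin_half : 0 < sin (π * (p / 2)) :=
    sin_pos_of_pos_of_lt_pi (by positivity) (by nlinarith [pi_pos])
  have h_I := integral_Ioi_rpow_div_add hp₀ hp₁ hx
  have h_K := integral_Ioi_rpow_div_sq_add_one hp₀ hp₁
  have hI_int : IntegrableOn (fun t : ℝ => t ^ (p - 1) / (t + x)) (Ioi 0) :=
    Integrable.of_integral_ne_zero <| by
      rw [h_I]; exact (mul_pos (by positivity) (div_pos pi_pos h_sin)).ne'
  have hK_int : IntegrableOn (fun t : ℝ => t ^ (p - 1) / (t ^ 2 + 1)) (Ioi 0) :=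
    Integrable.of_integral_ne_zero (by rw [h_K]; exact (div_pos pi_pos (by positivity)).ne')
  have h_half_angle : sin (π * p) / π * (π / (2 * sin (π * (p / 2)))) = cos (π * (p / 2)) := by
    rw [show π * p = 2 * (π * (p / 2)) by ring, sin_two_mul]
    generalize π * (p / 2) = θ at h_sin_half ⊢
    field_simp
  rw [setIntegral_congr_fun measurableSet_Ioi h_split, integral_sub hK_int (hI_int.const_mul x),
    integral_const_mul, h_I, h_K, show p * π / 2 = π * (p / 2) by ring, mul_comm p π, mul_sub,
    h_half_angle, ← mul_assoc x, ← rpow_one_add' hx.le (by linarith), add_sub_cancel]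
  field_simp
  ring
end

section
/- For β ∈ (0,1) and any x > 0, the power function admits the integral representation x^β = (sin(βπ)/π) ∫₀^∞ t^β (1/t - 1/(t+x)) dt. -/
open MeasureTheory Real Set

/-! Scaling `t ↦ x t` (`Real.integral_rpowIntegrand₀₁_eq_rpow_mul_const`) shows that the integral
is `x ^ β` times its value at `x = 1`, namely `∫₀^∞ t ^ (β - 1) / (1 + t) dt`. The substitution
`t = u / (1 - u)` turns this into the beta integral `B(β, 1 - β) = Γ(β) Γ(1 - β)`, which is
`π / sin (π β)` by Euler's reflection formula. -/

lemma integral_Ioo_rpow_mul_one_sub_rpow {a b : ℝ} (ha : 0 < a) (hb : 0 < b) :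
    ∫ u in Ioo (0 : ℝ) 1, u ^ (a - 1) * (1 - u) ^ (b - 1) = Gamma a * Gamma b / Gamma (a + b) := by
  apply Complex.ofReal_injective
  have hbeta := Complex.betaIntegral_eq_Gamma_mul_div a b (by simpa) (by simpa)
  push_cast [← Complex.Gamma_ofReal] at hbeta ⊢
  rw [← hbeta, Complex.betaIntegral, intervalIntegral.integral_of_le zero_le_one,
    ← integral_Ioc_eq_integral_Ioo, ← integral_complex_ofReal]
  refine setIntegral_congr_fun measurableSet_Ioc fun u ⟨hu₀, hu₁⟩ ↦ ?_
  push_cast [Complex.ofReal_cpow hu₀.le, Complex.ofReal_cpow (sub_nonneg.2 hu₁)]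
  rfl

lemma integral_Ioo_rpow_mul_one_sub_rpow_neg {p : ℝ} (hp : p ∈ Ioo 0 1) :
    ∫ u in Ioo (0 : ℝ) 1, u ^ (p - 1) * (1 - u) ^ (-p) = π / sin (π * p) := by
  have h := integral_Ioo_rpow_mul_one_sub_rpow hp.1 (sub_pos.2 hp.2)
  rwa [sub_sub_cancel_left, add_sub_cancel, Gamma_one, div_one, Gamma_mul_Gamma_one_sub] at h

lemma image_div_one_sub_Ioo : (fun u : ℝ ↦ u / (1 - u)) '' Ioo 0 1 = Ioi 0 := by
  ext t
  constructor
  · rintro ⟨u, ⟨hu₀, hu₁⟩, rfl⟩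
    exact div_pos hu₀ (sub_pos.2 hu₁)
  · intro (ht : 0 < t)
    refine ⟨t / (1 + t), ⟨by positivity, (div_lt_one (by positivity)).2 (by linarith)⟩, ?_⟩
    field_simp
    ring

lemma injOn_div_one_sub_Ioo : InjOn (fun u : ℝ ↦ u / (1 - u)) (Ioo 0 1) := by
  intro u ⟨_, hu₁⟩ v ⟨_, hv₁⟩ huv
  have : 1 - u ≠ 0 := by linarith
  have : 1 - v ≠ 0 := by linarith
  field_simp at huv
  linarith

lemma hasDerivAt_div_one_sub {u : ℝ} (hu : u ≠ 1) :
    HasDerivAt (fun u : ℝ ↦ u / (1 - u)) ((1 - u) ^ 2)⁻¹ u := by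
  have h1u : 1 - u ≠ 0 := sub_ne_zero.2 hu.symm
  refine ((hasDerivAt_id' u).div ((hasDerivAt_id' u).const_sub 1) h1u).congr_deriv ?_
  field_simp
  ring

lemma integral_Ioi_rpow_mul_one_add_rpow (a b : ℝ) :
    ∫ t in Ioi (0 : ℝ), t ^ (a - 1) * (1 + t) ^ (-(a + b))
      = ∫ u in Ioo (0 : ℝ) 1, u ^ (a - 1) * (1 - u) ^ (b - 1) := by
  rw [← image_div_one_sub_Ioo, integral_image_eq_integral_abs_deriv_smul measurableSet_Ioo
    (fun u hu ↦ (hasDerivAt_div_one_sub hu.2.ne).hasDerivWithinAt) injOn_div_one_sub_Ioo]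
  refine setIntegral_congr_fun measurableSet_Ioo fun u ⟨hu₀, hu₁⟩ ↦ ?_
  have h1u : 0 < 1 - u := sub_pos.2 hu₁
  have hsq : ((1 - u) ^ 2)⁻¹ = (1 - u) ^ (-2 : ℝ) := by
    rw [rpow_neg h1u.le, rpow_two]
  have hone_add : 1 + u / (1 - u) = (1 - u)⁻¹ := by
    field_simp
    ring
  rw [smul_eq_mul, abs_of_pos (by positivity), hone_add, hsq, div_rpow hu₀.le h1u.le,
    inv_rpow h1u.le, ← rpow_neg h1u.le, neg_neg, div_eq_mul_inv, ← rpow_neg h1u.le]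
  calc (1 - u) ^ (-2 : ℝ) * (u ^ (a - 1) * (1 - u) ^ (-(a - 1)) * (1 - u) ^ (a + b))
      = u ^ (a - 1) * ((1 - u) ^ (-2 : ℝ) * (1 - u) ^ (-(a - 1)) * (1 - u) ^ (a + b)) := by ring
    _ = u ^ (a - 1) * (1 - u) ^ (b - 1) := by
      rw [← rpow_add h1u, ← rpow_add h1u]
      ring_nf

lemma integral_rpowIntegrand₀₁_one {p : ℝ} (hp : p ∈ Ioo 0 1) :
    ∫ t in Ioi (0 : ℝ), rpowIntegrand₀₁ p t 1 = π / sin (π * p) := by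
  calc ∫ t in Ioi (0 : ℝ), rpowIntegrand₀₁ p t 1
      = ∫ t in Ioi (0 : ℝ), t ^ (p - 1) * (1 + t) ^ (-(p + (1 - p))) := by
        refine setIntegral_congr_fun measurableSet_Ioi fun t (ht : 0 < t) ↦ ?_
        rw [rpowIntegrand₀₁_eq_pow_div hp ht.le zero_le_one, add_sub_cancel, rpow_neg_one,
          add_comm t, mul_one, div_eq_mul_inv]
    _ = π / sin (π * p) := by
      rw [integral_Ioi_rpow_mul_one_add_rpow, sub_sub_cancel_left,
        integral_Ioo_rpow_mul_one_sub_rpow_neg hp]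

theorem rpow_integral_repr (β x : ℝ) (hβ : β ∈ Set.Ioo (0 : ℝ) 1) (hx : 0 < x) :
    x ^ β = (Real.sin (β * Real.pi) / Real.pi) *
      ∫ t in Set.Ioi (0 : ℝ), t ^ β * (1 / t - 1 / (t + x)) := by
  have hsin : sin (π * β) ≠ 0 :=
    (sin_pos_of_pos_of_lt_pi (mul_pos pi_pos hβ.1) (mul_lt_of_lt_one_right pi_pos hβ.2)).ne'
  simp only [one_div]
  change x ^ β = _ * ∫ t in Ioi 0, rpowIntegrand₀₁ β t x
  rw [integral_rpowIntegrand₀₁_eq_rpow_mul_const hβ hx.le,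
    integral_rpowIntegrand₀₁_one hβ, mul_comm β π]
  field_simp
end

section
/- Let f : (0,∞) → ℝ be convex with f(1) = 0 and strictly convex at 1. If p and q are probability distributions with S_f(p||q) = Σ_j p_j f(q_j/p_j) = 0, then p = q. -/
/-!
Put `x j = q j / p j`, so that `∑ p j * x j = 1 = ∑ p j`. A supporting line `ℓ y = c * (y - 1)` of
`f` at `1` then has `∑ p j * ℓ (x j) = 0 = ∑ p j * f (x j)`, so `f (x j) = ℓ (x j)` for every `j`.
If `p ≠ q`, some `x i < 1 < x j`; convexity forces `f ≤ ℓ` on `[x i, x j]`, hence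
`f (1 - ε) + f (1 + ε) ≤ 0 = 2 * f 1` for small `ε > 0`, against strict convexity at `1`.
-/

open Set

theorem ConvexOn.le_add_rightDeriv_mul_sub {S : Set ℝ} {f : ℝ → ℝ} {x y : ℝ}
    (hf : ConvexOn ℝ S f) (hx : x ∈ interior S) (hy : y ∈ S) :
    f x + derivWithin f (Ioi x) x * (y - x) ≤ f y := by
  rcases lt_trichotomy x y with hxy | rfl | hyx
  · have h := hf.rightDeriv_le_slope_of_mem_interior hx hy hxy
    rw [slope_def_field, le_div_iff₀ (sub_pos.2 hxy)] at h
    linarith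
  · simp
  · have h := (hf.slope_le_leftDeriv_of_mem_interior hy hx hyx).trans
      (hf.leftDeriv_le_rightDeriv_of_mem_interior hx)
    rw [slope_def_field, div_le_iff₀ (sub_pos.2 hyx)] at h
    linarith

theorem ConvexOn.le_affine_of_mem_Icc {s : Set ℝ} {f : ℝ → ℝ} {a b z c d : ℝ}
    (hf : ConvexOn ℝ s f) (ha : a ∈ s) (hb : b ∈ s) (hfa : f a ≤ d + c * a)
    (hfb : f b ≤ d + c * b) (hz : z ∈ Icc a b) : f z ≤ d + c * z := by
  have hline : ConcaveOn ℝ s fun y => d + c * y :=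
    ⟨hf.1, fun u _ v _ μ ν _ _ hμν => le_of_eq <| by
      simp only [smul_eq_mul]; linear_combination d * hμν⟩
  have h := (hf.sub hline).le_max_of_mem_Icc ha hb hz
  simp only [Pi.sub_apply] at h
  linarith [max_le (sub_nonpos.2 hfa) (sub_nonpos.2 hfb)]

theorem ConvexOn.exists_midpoint_add_le {s : Set ℝ} {f : ℝ → ℝ} {a b t c : ℝ}
    (hf : ConvexOn ℝ s f) (ha : a ∈ s) (hb : b ∈ s) (hat : a < t) (htb : t < b)
    (hfa : f a ≤ f t + c * (a - t)) (hfb : f b ≤ f t + c * (b - t)) :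
    ∃ y z, y ∈ Icc a b ∧ z ∈ Icc a b ∧ y ≠ z ∧ (y + z) / 2 = t ∧ f y + f z ≤ 2 * f t := by
  set ε := min (t - a) (b - t)
  have hε : 0 < ε := lt_min (by linarith) (by linarith)
  have hεa : ε ≤ t - a := min_le_left _ _
  have hεb : ε ≤ b - t := min_le_right _ _
  have hchord : ∀ z ∈ Icc a b, f z ≤ (f t - c * t) + c * z := fun z hz =>
    hf.le_affine_of_mem_Icc ha hb (by linarith) (by linarith) hz
  have hlow := hchord (t - ε) ⟨by linarith, by linarith⟩
  have hhigh := hchord (t + ε) ⟨by linarith, by linarith⟩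
  exact ⟨t - ε, t + ε, ⟨by linarith, by linarith⟩, ⟨by linarith, by linarith⟩, by linarith,
    by ring, by linarith⟩

section WeightedSum

variable {ι 𝕜 : Type*} [Fintype ι] [CommRing 𝕜] [LinearOrder 𝕜] [IsStrictOrderedRing 𝕜]
  {w : ι → 𝕜}

theorem eq_of_le_of_sum_mul_eq {g h : ι → 𝕜} (hw : ∀ i, 0 < w i) (hle : ∀ i, g i ≤ h i)
    (hsum : ∑ i, w i * g i = ∑ i, w i * h i) (i : ι) : g i = h i :=
  mul_left_cancel₀ (hw i).ne' <| (Finset.sum_eq_sum_iff_of_le fun j _ =>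
    mul_le_mul_of_nonneg_left (hle j) (hw j).le).1 hsum i (Finset.mem_univ i)

variable {x : ι → 𝕜} {t : 𝕜}

theorem exists_lt_of_sum_mul_sub_eq_zero (hw : ∀ i, 0 < w i)
    (hsum : ∑ i, w i * (x i - t) = 0) {k : ι} (hk : x k ≠ t) : ∃ i, x i < t := by
  by_contra! hge
  have hzero : ∀ i, (0 : 𝕜) = x i - t :=
    eq_of_le_of_sum_mul_eq hw (fun i => sub_nonneg.2 (hge i)) (by simp [hsum])
  exact hk (sub_eq_zero.1 (hzero k).symm)

theorem exists_gt_of_sum_mul_sub_eq_zero (hw : ∀ i, 0 < w i)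
    (hsum : ∑ i, w i * (x i - t) = 0) {k : ι} (hk : x k ≠ t) : ∃ i, t < x i := by
  have hsum' : ∑ i, w i * (-x i - -t) = 0 := by
    simp only [neg_sub_neg, ← neg_sub (x _), mul_neg, Finset.sum_neg_distrib, hsum, neg_zero]
  simpa using exists_lt_of_sum_mul_sub_eq_zero hw hsum' (neg_injective.ne hk)

end WeightedSum

/-- If `f` is convex on `(0,∞)` with `f(1)=0` and strictly convex at `1`, then vanishing of
the classical f-divergence `Σ_j p_j f(q_j/p_j) = 0` forces `p = q`. -/
theorem classical_fDivergence_eq_zero {ι : Type*} [Fintype ι]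
    (f : ℝ → ℝ) (hf : ConvexOn ℝ (Set.Ioi (0 : ℝ)) f) (hf1 : f 1 = 0)
    (hstrict : ∀ x y : ℝ, 0 < x → 0 < y → x ≠ y → (x + y) / 2 = 1 →
      f ((x + y) / 2) < (f x + f y) / 2)
    (p q : ι → ℝ) (hp : ∀ j, 0 < p j) (hq : ∀ j, 0 < q j)
    (hps : ∑ j, p j = 1) (hqs : ∑ j, q j = 1)
    (hzero : ∑ j, p j * f (q j / p j) = 0) :
    p = q := by
  set x : ι → ℝ := fun j => q j / p j
  have hx : ∀ j, 0 < x j := fun j => div_pos (hq j) (hp j)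
  have hmean : ∑ j, p j * (x j - 1) = 0 := by
    simp only [x, mul_sub, mul_div_cancel₀ _ (hp _).ne', mul_one, Finset.sum_sub_distrib, hps,
      hqs, sub_self]
  set c := derivWithin f (Ioi 1) 1
  have hsupport : ∀ y, 0 < y → c * (y - 1) ≤ f y := fun y hy => by
    simpa only [hf1, zero_add] using
      hf.le_add_rightDeriv_mul_sub (by simp [interior_Ioi] : (1 : ℝ) ∈ interior (Ioi 0)) hy
  have hline : ∀ j, c * (x j - 1) = f (x j) := by
    refine eq_of_le_of_sum_mul_eq hp (fun j => hsupport _ (hx j)) ?_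
    simp only [mul_left_comm _ c, ← Finset.mul_sum, hmean, mul_zero, x, hzero]
  by_contra hpq
  obtain ⟨k, hk⟩ := Function.ne_iff.1 hpq
  have hxk : x k ≠ 1 := fun h => hk ((div_eq_one_iff_eq (hp k).ne').1 h).symm
  obtain ⟨i, hi⟩ := exists_lt_of_sum_mul_sub_eq_zero hp hmean hxk
  obtain ⟨j, hj⟩ := exists_gt_of_sum_mul_sub_eq_zero hp hmean hxk
  obtain ⟨y, z, hy, hz, hyz, hmid, hle⟩ := hf.exists_midpoint_add_le (hx i) (hx j) hi hj
    (by rw [hf1, zero_add, hline]) (by rw [hf1, zero_add, hline])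
  have hlt := hstrict y z ((hx i).trans_le hy.1) ((hx i).trans_le hz.1) hyz hmid
  rw [hmid] at hlt
  linarith
end

section
/- Let U be a partial isometry from a Hilbert space K into a Hilbert space H (U*U = I on K), B an invertible positive operator on K, A an invertible positive operator on H with U*AU = B. Then for all v ∈ K, ⟨v, U*A⁻¹Uv⟩ = ⟨v, B⁻¹v⟩ + ⟨w, Aw⟩, where w = UB⁻¹v − A⁻¹Uv. -/
open scoped InnerProductSpace

/-!
Write `b = B⁻¹v` and `a = A⁻¹Uv`. Expanding `⟪Ub - a, A(Ub - a)⟫` and using `Aa = Uv`, the symmetry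
of `A`, the compression identity `⟪Ux, AUy⟫ = ⟪x, By⟫` and the isometry of `U`, the four terms are
`⟪b, v⟫`, `⟪b, v⟫`, `⟪v, b⟫` and `⟪Uv, a⟫`, which gives the identity.
-/

namespace LinearMap.IsSymmetric

variable {𝕜 E : Type*} [RCLike 𝕜] [NormedAddCommGroup E] [InnerProductSpace 𝕜 E]
  {A : E →ₗ[𝕜] E}

theorem inner_sub_map_sub (hA : A.IsSymmetric) (x y : E) :
    ⟪x - y, A (x - y)⟫_𝕜 = ⟪x, A x⟫_𝕜 - ⟪x, A y⟫_𝕜 - ⟪A y, x⟫_𝕜 + ⟪A y, y⟫_𝕜 := by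
  simp only [map_sub, inner_sub_left, inner_sub_right, ← hA y]
  ring

variable {F : Type*} [NormedAddCommGroup F] [InnerProductSpace 𝕜 F]

theorem inner_resolvent_eq_of_compression {U : F →ₗ[𝕜] E}
    (hU : ∀ x y : F, ⟪U x, U y⟫_𝕜 = ⟪x, y⟫_𝕜) (hA : A.IsSymmetric) {B : F →ₗ[𝕜] F}
    (hUAU : ∀ x y : F, ⟪U x, A (U y)⟫_𝕜 = ⟪x, B y⟫_𝕜)
    {v b : F} (hb : B b = v) {a : E} (ha : A a = U v) :
    ⟪U v, a⟫_𝕜 = ⟪v, b⟫_𝕜 + ⟪U b - a, A (U b - a)⟫_𝕜 := by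
  rw [hA.inner_sub_map_sub, hUAU, hb, ha, hU, hU]
  ring

end LinearMap.IsSymmetric

theorem resolvent_identity_general
    {H K : Type*} [NormedAddCommGroup H] [InnerProductSpace ℂ H] [FiniteDimensional ℂ H]
    [NormedAddCommGroup K] [InnerProductSpace ℂ K] [FiniteDimensional ℂ K]
    (U : K →ₗ[ℂ] H) (hU : ∀ v w : K, ⟪U v, U w⟫_ℂ = ⟪v, w⟫_ℂ)
    (A Ainv : H →ₗ[ℂ] H) (B Binv : K →ₗ[ℂ] K)
    (hA : A.IsSymmetric)
    (hAinv : A.comp Ainv = LinearMap.id ∧ Ainv.comp A = LinearMap.id)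
    (hBinv : B.comp Binv = LinearMap.id ∧ Binv.comp B = LinearMap.id)
    (hUAU : (LinearMap.adjoint U).comp (A.comp U) = B)
    (v : K) :
    ⟪v, (LinearMap.adjoint U) (Ainv (U v))⟫_ℂ =
      ⟪v, Binv v⟫_ℂ + ⟪U (Binv v) - Ainv (U v), A (U (Binv v) - Ainv (U v))⟫_ℂ := by
  have compression (x y : K) : ⟪U x, A (U y)⟫_ℂ = ⟪x, B y⟫_ℂ := by
    rw [← LinearMap.adjoint_inner_right, ← hUAU]
    rfl
  rw [LinearMap.adjoint_inner_right]
  exact hA.inner_resolvent_eq_of_compression hU compression (LinearMap.congr_fun hBinv.1 v)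
    (LinearMap.congr_fun hAinv.1 (U v))

/-- Lemma 2.1 of Carlen–Vershynina: if `U : K → H` is an isometry, `A` a positive definite
invertible operator on `H`, `B` a positive definite invertible operator on `K`, with
`U*AU = B`, then `⟨v, U*A⁻¹Uv⟩ = ⟨v, B⁻¹v⟩ + ⟨w, Aw⟩` where `w = UB⁻¹v − A⁻¹Uv`. -/
theorem resolvent_identity
    {H K : Type*} [NormedAddCommGroup H] [InnerProductSpace ℂ H] [FiniteDimensional ℂ H]
    [NormedAddCommGroup K] [InnerProductSpace ℂ K] [FiniteDimensional ℂ K]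
    (U : K →ₗ[ℂ] H) (hU : ∀ v w : K, ⟪U v, U w⟫_ℂ = ⟪v, w⟫_ℂ)
    (A Ainv : H →ₗ[ℂ] H) (B Binv : K →ₗ[ℂ] K)
    (hA : A.IsSymmetric) (hApos : ∀ v : H, v ≠ 0 → 0 < (⟪v, A v⟫_ℂ).re)
    (hB : B.IsSymmetric) (hBpos : ∀ v : K, v ≠ 0 → 0 < (⟪v, B v⟫_ℂ).re)
    (hAinv : A.comp Ainv = LinearMap.id ∧ Ainv.comp A = LinearMap.id)
    (hBinv : B.comp Binv = LinearMap.id ∧ Binv.comp B = LinearMap.id)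
    (hUAU : (LinearMap.adjoint U).comp (A.comp U) = B)
    (v : K) :
    ⟪v, (LinearMap.adjoint U) (Ainv (U v))⟫_ℂ =
      ⟪v, Binv v⟫_ℂ + ⟪U (Binv v) - Ainv (U v), A (U (Binv v) - Ainv (U v))⟫_ℂ :=
  resolvent_identity_general U hU A Ainv B Binv hA hAinv hBinv hUAU v
end

section
/- With the notation of the previous lemma (U isometry, U*AU = B, A,B positive definite), for all v ∈ K one has ⟨v, U*A⁻¹Uv⟩ ≥ ⟨v, B⁻¹v⟩, i.e. the resolvent difference is nonnegative. -/
/-!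
With `x = A⁻¹u`, positivity of `A` on `x - y` gives `2 re⟪u, y⟫ - re⟪y, Ay⟫ ≤ re⟪u, A⁻¹u⟫`
for every `y`. Taking `u = Uv` and `y = UB⁻¹v`, the isometry property and `U*AU = B` turn
the left-hand side into `re⟪v, B⁻¹v⟫`.
-/

open scoped InnerProductSpace

namespace LinearMap

variable {𝕜 E : Type*} [RCLike 𝕜] [NormedAddCommGroup E] [InnerProductSpace 𝕜 E]

theorem isPositive_of_re_inner_pos {T : E →ₗ[𝕜] E} (hT : T.IsSymmetric)
    (hpos : ∀ v : E, v ≠ 0 → 0 < RCLike.re ⟪v, T v⟫_𝕜) : T.IsPositive := by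
  refine ⟨hT, fun v => ?_⟩
  rcases eq_or_ne v 0 with rfl | hv
  · simp
  · rw [hT]
    exact (hpos v hv).le

theorem IsPositive.two_re_inner_sub_le_re_inner_rightInverse {A Ainv : E →ₗ[𝕜] E}
    (hA : A.IsPositive) (hAinv : A ∘ₗ Ainv = LinearMap.id) (u y : E) :
    2 * RCLike.re ⟪u, y⟫_𝕜 - RCLike.re ⟪y, A y⟫_𝕜 ≤ RCLike.re ⟪u, Ainv u⟫_𝕜 := by
  set x := Ainv u
  have hAx : A x = u := LinearMap.congr_fun hAinv u
  have hxx : ⟪x, A x⟫_𝕜 = ⟪x, u⟫_𝕜 := by rw [hAx]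
  have hxy : ⟪x, A y⟫_𝕜 = ⟪u, y⟫_𝕜 := by rw [← hA.isSymmetric, hAx]
  have hyx : ⟪y, A x⟫_𝕜 = ⟪y, u⟫_𝕜 := by rw [hAx]
  have hnonneg := hA.re_inner_nonneg_right (x - y)
  simp only [map_sub, inner_sub_left, inner_sub_right, hxx, hxy, hyx] at hnonneg
  rw [inner_re_symm (𝕜 := 𝕜) x u, inner_re_symm (𝕜 := 𝕜) y u] at hnonneg
  linarith

end LinearMap

theorem resolvent_inequality_general
    {H K : Type*} [NormedAddCommGroup H] [InnerProductSpace ℂ H] [FiniteDimensional ℂ H]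
    [NormedAddCommGroup K] [InnerProductSpace ℂ K] [FiniteDimensional ℂ K]
    (U : K →ₗ[ℂ] H) (hU : ∀ v w : K, ⟪U v, U w⟫_ℂ = ⟪v, w⟫_ℂ)
    (A Ainv : H →ₗ[ℂ] H) (B Binv : K →ₗ[ℂ] K)
    (hA : A.IsSymmetric) (hApos : ∀ v : H, v ≠ 0 → 0 < (⟪v, A v⟫_ℂ).re)
    (hAinv : A.comp Ainv = LinearMap.id ∧ Ainv.comp A = LinearMap.id)
    (hBinv : B.comp Binv = LinearMap.id ∧ Binv.comp B = LinearMap.id)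
    (hUAU : (LinearMap.adjoint U).comp (A.comp U) = B)
    (v : K) :
    (⟪v, Binv v⟫_ℂ).re ≤ (⟪v, (LinearMap.adjoint U) (Ainv (U v))⟫_ℂ).re := by
  set w := Binv v
  have hBw : B w = v := LinearMap.congr_fun hBinv.1 v
  have hUw : ⟪U w, A (U w)⟫_ℂ = ⟪w, v⟫_ℂ := by
    rw [← LinearMap.adjoint_inner_right, ← hBw, ← hUAU]
    rfl
  have key := (LinearMap.isPositive_of_re_inner_pos hA hApos).two_re_inner_sub_le_re_inner_rightInverse
    hAinv.1 (U v) (U w)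
  rw [hU, hUw, inner_re_symm (𝕜 := ℂ) w v] at key
  rw [LinearMap.adjoint_inner_right]
  simp only [RCLike.re_to_complex] at key
  linarith

/-- With `U` an isometry, `A`, `B` positive definite and `U*AU = B`, one has
`⟨v, U*A⁻¹Uv⟩ ≥ ⟨v, B⁻¹v⟩` for all `v`. -/
theorem resolvent_inequality
    {H K : Type*} [NormedAddCommGroup H] [InnerProductSpace ℂ H] [FiniteDimensional ℂ H]
    [NormedAddCommGroup K] [InnerProductSpace ℂ K] [FiniteDimensional ℂ K]
    (U : K →ₗ[ℂ] H) (hU : ∀ v w : K, ⟪U v, U w⟫_ℂ = ⟪v, w⟫_ℂ)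
    (A Ainv : H →ₗ[ℂ] H) (B Binv : K →ₗ[ℂ] K)
    (hA : A.IsSymmetric) (hApos : ∀ v : H, v ≠ 0 → 0 < (⟪v, A v⟫_ℂ).re)
    (hB : B.IsSymmetric) (hBpos : ∀ v : K, v ≠ 0 → 0 < (⟪v, B v⟫_ℂ).re)
    (hAinv : A.comp Ainv = LinearMap.id ∧ Ainv.comp A = LinearMap.id)
    (hBinv : B.comp Binv = LinearMap.id ∧ Binv.comp B = LinearMap.id)
    (hUAU : (LinearMap.adjoint U).comp (A.comp U) = B)
    (v : K) :
    (⟪v, Binv v⟫_ℂ).re ≤ (⟪v, (LinearMap.adjoint U) (Ainv (U v))⟫_ℂ).re :=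
  resolvent_inequality_general U hU A Ainv B Binv hA hApos hAinv hBinv hUAU v
end

section
/- Let ρ be an invertible density matrix on H₁⊗H₂ with partial trace ρ₁ = Tr₂ρ (also invertible), and V a unitary on H₂. Define U(X₁) = (X₁⊗V) ρ₁^{-1/2} ρ^{1/2} for X₁ an operator on H₁, regarded as a map into operators on H₁⊗H₂ with the Hilbert–Schmidt inner product. Then U is an isometry: ⟨U(X₁), U(Y₁)⟩_HS = ⟨X₁, Y₁⟩_HS for all X₁, Y₁. -/
/-!
Writing `U(X) = ((X s₁) ⊗ V) √ρ`, unitarity of `V` gives `U(X)ᴴ U(Y) = √ρ ((s₁ Xᴴ Y s₁) ⊗ 1) √ρ`.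
Cycling the trace turns this into `Tr(((s₁ Xᴴ Y s₁) ⊗ 1) ρ) = Tr(s₁ Xᴴ Y s₁ ρ₁)`, and cycling once
more leaves `Tr(Xᴴ Y (s₁ ρ₁ s₁)) = Tr(Xᴴ Y)`.
-/

open Matrix
open scoped Kronecker ComplexOrder

/-- Partial trace over the second tensor factor. -/
noncomputable def ptrace2 {ι₁ ι₂ : Type*} [Fintype ι₁] [Fintype ι₂]
    (ρ : Matrix (ι₁ × ι₂) (ι₁ × ι₂) ℂ) : Matrix ι₁ ι₁ ℂ :=
  Matrix.of fun i j => ∑ k, ρ (i, k) (j, k)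

section Kronecker

variable {ι₁ ι₂ : Type*}

lemma conjTranspose_kronecker_mul_kronecker_of_mem_unitaryGroup {R : Type*} [CommRing R]
    [StarRing R] [Fintype ι₁] [Fintype ι₂] [DecidableEq ι₂] (A B : Matrix ι₁ ι₁ R)
    {V : Matrix ι₂ ι₂ R} (hV : V ∈ unitaryGroup ι₂ R) :
    (A ⊗ₖ V)ᴴ * (B ⊗ₖ V) = (Aᴴ * B) ⊗ₖ (1 : Matrix ι₂ ι₂ R) := by
  have hVV : Vᴴ * V = 1 := mem_unitaryGroup_iff'.mp hV
  rw [conjTranspose_kronecker, ← mul_kronecker_mul, hVV]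

lemma trace_kronecker_one_mul_eq_trace_mul_ptrace2 [Fintype ι₁] [Fintype ι₂] [DecidableEq ι₂]
    (A : Matrix ι₁ ι₁ ℂ) (M : Matrix (ι₁ × ι₂) (ι₁ × ι₂) ℂ) :
    ((A ⊗ₖ (1 : Matrix ι₂ ι₂ ℂ)) * M).trace = (A * ptrace2 M).trace := by
  simp only [trace, diag_apply, mul_apply, Fintype.sum_prod_type, kroneckerMap_apply,
    ptrace2, of_apply, one_apply, mul_ite, mul_one, mul_zero, ite_mul, zero_mul,
    Finset.sum_ite_eq, Finset.mem_univ, if_true, Finset.mul_sum]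
  exact Finset.sum_congr rfl fun i _ => Finset.sum_comm ..

end Kronecker

theorem sharma_map_isometry_general {ι₁ ι₂ : Type*} [Fintype ι₁] [Fintype ι₂]
    [DecidableEq ι₁] [DecidableEq ι₂]
    (ρ : Matrix (ι₁ × ι₂) (ι₁ × ι₂) ℂ)
    (V : Matrix ι₂ ι₂ ℂ) (hV : V ∈ Matrix.unitaryGroup ι₂ ℂ)
    (sqrtρ : Matrix (ι₁ × ι₂) (ι₁ × ι₂) ℂ) (hsq : sqrtρ.IsHermitian)
    (hsqrt : sqrtρ * sqrtρ = ρ)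
    (s₁ : Matrix ι₁ ι₁ ℂ) (hs₁herm : s₁.IsHermitian)
    (hs₁ : s₁ * s₁ * ptrace2 ρ = 1)
    (X Y : Matrix ι₁ ι₁ ℂ) :
    (((X ⊗ₖ V) * (s₁ ⊗ₖ (1 : Matrix ι₂ ι₂ ℂ)) * sqrtρ)ᴴ *
        ((Y ⊗ₖ V) * (s₁ ⊗ₖ (1 : Matrix ι₂ ι₂ ℂ)) * sqrtρ)).trace =
      (Xᴴ * Y).trace := by
  have hU (Z : Matrix ι₁ ι₁ ℂ) : (Z ⊗ₖ V) * (s₁ ⊗ₖ (1 : Matrix ι₂ ι₂ ℂ)) = (Z * s₁) ⊗ₖ V := by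
    rw [← mul_kronecker_mul, Matrix.mul_one]
  have hs₁ρ₁s₁ : s₁ * ptrace2 ρ * s₁ = 1 :=
    mul_eq_one_comm.mp (by rw [← Matrix.mul_assoc, hs₁])
  calc _ = (sqrtρ * (((X * s₁) ⊗ₖ V)ᴴ * ((Y * s₁) ⊗ₖ V)) * sqrtρ).trace := by
        rw [hU, hU, conjTranspose_mul, hsq.eq]; simp only [Matrix.mul_assoc]
    _ = ((((X * s₁)ᴴ * (Y * s₁)) ⊗ₖ (1 : Matrix ι₂ ι₂ ℂ)) * ρ).trace := by
        rw [conjTranspose_kronecker_mul_kronecker_of_mem_unitaryGroup _ _ hV, Matrix.mul_assoc,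
          trace_mul_comm, Matrix.mul_assoc, hsqrt]
    _ = (Xᴴ * Y * (s₁ * ptrace2 ρ * s₁)).trace := by
        rw [trace_kronecker_one_mul_eq_trace_mul_ptrace2, conjTranspose_mul, hs₁herm.eq]
        simp only [Matrix.mul_assoc]
        rw [trace_mul_comm s₁]
        simp only [Matrix.mul_assoc]
    _ = (Xᴴ * Y).trace := by rw [hs₁ρ₁s₁, Matrix.mul_one]

/-- The map `U(X₁) = (X₁⊗V) ρ₁^{-1/2} ρ^{1/2}` is an isometry for the Hilbert–Schmidt
inner product `⟨A,B⟩ = Tr(A*B)`. Here `sqrtρ = ρ^{1/2}` and `s₁ = ρ₁^{-1/2}` (acting as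
`ρ₁^{-1/2} ⊗ I`), where `ρ₁ = Tr₂ ρ`. -/
theorem sharma_map_isometry {ι₁ ι₂ : Type*} [Fintype ι₁] [Fintype ι₂]
    [DecidableEq ι₁] [DecidableEq ι₂]
    (ρ : Matrix (ι₁ × ι₂) (ι₁ × ι₂) ℂ) (hρherm : ρ.IsHermitian) (hρpos : ρ.PosDef)
    (hρtr : ρ.trace = 1)
    (V : Matrix ι₂ ι₂ ℂ) (hV : V ∈ Matrix.unitaryGroup ι₂ ℂ)
    (sqrtρ : Matrix (ι₁ × ι₂) (ι₁ × ι₂) ℂ) (hsq : sqrtρ.IsHermitian)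
    (hsqrt : sqrtρ * sqrtρ = ρ)
    (s₁ : Matrix ι₁ ι₁ ℂ) (hs₁herm : s₁.IsHermitian)
    (hs₁ : s₁ * s₁ * ptrace2 ρ = 1) (hs₁' : ptrace2 ρ * (s₁ * s₁) = 1)
    (X Y : Matrix ι₁ ι₁ ℂ) :
    (((X ⊗ₖ V) * (s₁ ⊗ₖ (1 : Matrix ι₂ ι₂ ℂ)) * sqrtρ)ᴴ *
        ((Y ⊗ₖ V) * (s₁ ⊗ₖ (1 : Matrix ι₂ ι₂ ℂ)) * sqrtρ)).trace =
      (Xᴴ * Y).trace :=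
  sharma_map_isometry_general ρ V hV sqrtρ hsq hsqrt s₁ hs₁herm hs₁ X Y
end

section
/- With U(X₁) = (X₁⊗V)ρ₁^{-1/2}ρ^{1/2} as above (V unitary, ρ, σ invertible density matrices on H₁⊗H₂), one has U* Δ_{σ,ρ} U (X₁) = Δ_{σ₁,ρ₁}(X₁) for all operators X₁ on H₁, where Δ_{σ,ρ}(X) = σXρ^{-1} and σ₁ = Tr₂σ, ρ₁ = Tr₂ρ. -/
open Matrix
open scoped Kronecker ComplexOrder

/-!
Write `S = ρ^{1/2}`, `K = ρ₁^{-1/2} ⊗ 1`. By cyclicity of the trace,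
`Tr((U Y)ᴴ σ (U X) ρ⁻¹) = Tr(K (Yᴴ ⊗ Vᴴ) σ (X ⊗ V) K · S ρ⁻¹ S)`, and `S ρ⁻¹ S = 1`.
Cycling once more, `(X ⊗ V) K² (Yᴴ ⊗ Vᴴ) = (X ρ₁⁻¹ Yᴴ) ⊗ V Vᴴ = (X ρ₁⁻¹ Yᴴ) ⊗ 1`, and the
trace of `σ` against an operator of the form `A ⊗ 1` is the trace of `σ₁ = Tr₂ σ` against `A`.
-/

namespace Matrix

variable {n : Type*} [Fintype n] [DecidableEq n] {R : Type*} [CommRing R]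

theorem mul_nonsing_inv_mul_of_mul_self {S ρ : Matrix n n R} (hS : S * S = ρ)
    (hρ : IsUnit ρ.det) : S * ρ⁻¹ * S = 1 := by
  have hSdet : IsUnit S.det := by
    rw [← hS, det_mul, IsUnit.mul_iff] at hρ
    exact hρ.1
  rw [← hS, mul_inv_rev, ← mul_assoc, mul_nonsing_inv _ hSdet, one_mul, nonsing_inv_mul _ hSdet]

theorem trace_mul_mul_mul_nonsing_inv_of_mul_self {S ρ : Matrix n n R} (hS : S * S = ρ)
    (hρ : IsUnit ρ.det) (M : Matrix n n R) : (S * M * S * ρ⁻¹).trace = M.trace := by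
  rw [mul_assoc, trace_mul_comm, ← mul_assoc, mul_nonsing_inv_mul_of_mul_self hS hρ, one_mul]

end Matrix

section PartialTrace

variable {ι₁ ι₂ : Type*} [Fintype ι₁] [Fintype ι₂] [DecidableEq ι₂]

theorem trace_mul_kronecker_one (σ : Matrix (ι₁ × ι₂) (ι₁ × ι₂) ℂ) (A : Matrix ι₁ ι₁ ℂ) :
    (σ * (A ⊗ₖ (1 : Matrix ι₂ ι₂ ℂ))).trace = (ptrace2 σ * A).trace := by
  simp only [Matrix.trace, Matrix.diag, Matrix.mul_apply, ptrace2, Matrix.kroneckerMap_apply,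
    Matrix.one_apply, Matrix.of_apply, Fintype.sum_prod_type, mul_ite, mul_one, mul_zero,
    Finset.sum_ite_eq', Finset.mem_univ, if_true, Finset.sum_mul]
  exact Finset.sum_congr rfl fun i _ => Finset.sum_comm ..

theorem trace_mul_kronecker_mul_kronecker_conjTranspose (σ : Matrix (ι₁ × ι₂) (ι₁ × ι₂) ℂ)
    (A B : Matrix ι₁ ι₁ ℂ) {V : Matrix ι₂ ι₂ ℂ} (hV : V ∈ unitaryGroup ι₂ ℂ) :
    (σ * (A ⊗ₖ V) * (B ⊗ₖ Vᴴ)).trace = (ptrace2 σ * (A * B)).trace := by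
  rw [mul_assoc, ← mul_kronecker_mul, ← star_eq_conjTranspose, mem_unitaryGroup_iff.mp hV,
    trace_mul_kronecker_one]

end PartialTrace

theorem sharma_map_modular_general {ι₁ ι₂ : Type*} [Fintype ι₁] [Fintype ι₂]
    [DecidableEq ι₁] [DecidableEq ι₂]
    (ρ σ : Matrix (ι₁ × ι₂) (ι₁ × ι₂) ℂ) (hρpos : ρ.PosDef)
    (V : Matrix ι₂ ι₂ ℂ) (hV : V ∈ Matrix.unitaryGroup ι₂ ℂ)
    (sqrtρ : Matrix (ι₁ × ι₂) (ι₁ × ι₂) ℂ) (hsq : sqrtρ.IsHermitian)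
    (hsqrt : sqrtρ * sqrtρ = ρ)
    (s₁ : Matrix ι₁ ι₁ ℂ) (hs₁herm : s₁.IsHermitian)
    (hs₁ : s₁ * s₁ * ptrace2 ρ = 1)
    (U : Matrix ι₁ ι₁ ℂ → Matrix (ι₁ × ι₂) (ι₁ × ι₂) ℂ)
    (hU : ∀ X, U X = (X ⊗ₖ V) * (s₁ ⊗ₖ (1 : Matrix ι₂ ι₂ ℂ)) * sqrtρ)
    (X Y : Matrix ι₁ ι₁ ℂ) :
    ((U Y)ᴴ * (σ * U X * ρ⁻¹)).trace =
      (Yᴴ * (ptrace2 σ * X * (ptrace2 ρ)⁻¹)).trace := by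
  set K := s₁ ⊗ₖ (1 : Matrix ι₂ ι₂ ℂ)
  have hK : Kᴴ = K := by rw [conjTranspose_kronecker, hs₁herm.eq, conjTranspose_one]
  have hρ₁inv : (ptrace2 ρ)⁻¹ = s₁ * s₁ := inv_eq_left_inv hs₁
  have hXK : X ⊗ₖ V * K * K = (X * s₁ * s₁) ⊗ₖ V := by
    simp only [K, ← mul_kronecker_mul, mul_one]
  calc ((U Y)ᴴ * (σ * U X * ρ⁻¹)).trace
      = (sqrtρ * (K * (Yᴴ ⊗ₖ Vᴴ) * σ * (X ⊗ₖ V) * K) * sqrtρ * ρ⁻¹).trace := by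
        rw [hU, hU, conjTranspose_mul, conjTranspose_mul, hsq.eq, hK, conjTranspose_kronecker]
        simp only [mul_assoc]
    _ = (σ * (X ⊗ₖ V * K * K) * (Yᴴ ⊗ₖ Vᴴ)).trace := by
        rw [trace_mul_mul_mul_nonsing_inv_of_mul_self hsqrt
          ((isUnit_iff_isUnit_det ρ).mp hρpos.isUnit), trace_mul_comm]
        simp only [mul_assoc]
        rw [← mul_assoc K, ← mul_assoc (K * K), trace_mul_comm]
        simp only [mul_assoc]
    _ = (Yᴴ * (ptrace2 σ * X * (ptrace2 ρ)⁻¹)).trace := by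
        rw [hXK, trace_mul_kronecker_mul_kronecker_conjTranspose σ _ _ hV, hρ₁inv,
          trace_mul_comm Yᴴ]
        simp only [mul_assoc]

/-- With `U(X₁) = (X₁⊗V) ρ₁^{-1/2} ρ^{1/2}`, one has `U* Δ_{σ,ρ} U = Δ_{σ₁,ρ₁}`, expressed
via the Hilbert–Schmidt inner products: `⟨U Y₁, Δ_{σ,ρ}(U X₁)⟩ = ⟨Y₁, Δ_{σ₁,ρ₁}(X₁)⟩` for
all `X₁, Y₁` (which, since `⟨Y₁, U*Z⟩ = ⟨U Y₁, Z⟩`, is the operator identity).  Here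
`Δ_{σ,ρ}(X) = σ X ρ⁻¹`, `ρ₁ = Tr₂ ρ`, `σ₁ = Tr₂ σ`. -/
theorem sharma_map_modular {ι₁ ι₂ : Type*} [Fintype ι₁] [Fintype ι₂]
    [DecidableEq ι₁] [DecidableEq ι₂]
    (ρ σ : Matrix (ι₁ × ι₂) (ι₁ × ι₂) ℂ) (hρpos : ρ.PosDef) (hσpos : σ.PosDef)
    (hρtr : ρ.trace = 1) (hσtr : σ.trace = 1)
    (V : Matrix ι₂ ι₂ ℂ) (hV : V ∈ Matrix.unitaryGroup ι₂ ℂ)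
    (sqrtρ : Matrix (ι₁ × ι₂) (ι₁ × ι₂) ℂ) (hsq : sqrtρ.IsHermitian)
    (hsqrt : sqrtρ * sqrtρ = ρ)
    (s₁ : Matrix ι₁ ι₁ ℂ) (hs₁herm : s₁.IsHermitian)
    (hs₁ : s₁ * s₁ * ptrace2 ρ = 1) (hs₁' : ptrace2 ρ * (s₁ * s₁) = 1)
    (U : Matrix ι₁ ι₁ ℂ → Matrix (ι₁ × ι₂) (ι₁ × ι₂) ℂ)
    (hU : ∀ X, U X = (X ⊗ₖ V) * (s₁ ⊗ₖ (1 : Matrix ι₂ ι₂ ℂ)) * sqrtρ)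
    (X Y : Matrix ι₁ ι₁ ℂ) :
    ((U Y)ᴴ * (σ * U X * ρ⁻¹)).trace =
      (Yᴴ * (ptrace2 σ * X * (ptrace2 ρ)⁻¹)).trace :=
  sharma_map_modular_general ρ σ hρpos V hV sqrtρ hsq hsqrt s₁ hs₁herm hs₁ U hU X Y
end

section
/- Joint convexity of the resolvent quadratic form: for fixed operator Y on a finite-dimensional Hilbert space and t > 0, the map (A,B) ↦ Tr(Y* (L_B + t R_A)^{-1}(Y)) is jointly convex over pairs of positive definite matrices A, B, where L_B(X) = BX and R_A(X) = XA. -/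
/-!
For a positive operator `L` on the Hilbert–Schmidt space and `L Z = Y`, expanding
`0 ≤ ⟨Z - X, L (Z - X)⟩` gives the variational formula
`⟨Y, L⁻¹ Y⟩ = max_X (2 Re ⟨Y, X⟩ - ⟨X, L X⟩)`, the maximum being attained at `X = Z`.
For `L = L_B + t R_A` the bracket is affine in `(A, B)`, so `⟨Y, L⁻¹ Y⟩` is a supremum of affine
functions; concretely, evaluating both bounds at the solution `Z` for the convex combination gives
the inequality.
-/

open Matrix
open scoped ComplexOrder

namespace Matrix

variable {𝕜 m n : Type*} [RCLike 𝕜] [Fintype m] [Fintype n]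

open RCLike

/-- `L_B + R_A`; the operator `L_B + t R_A` is `sylvesterMap B (t • A)`. -/
def sylvesterMap (B : Matrix m m 𝕜) (A : Matrix n n 𝕜) (X : Matrix m n 𝕜) : Matrix m n 𝕜 :=
  B * X + X * A

lemma sylvesterMap_sub (B : Matrix m m 𝕜) (A : Matrix n n 𝕜) (X W : Matrix m n 𝕜) :
    sylvesterMap B A (X - W) = sylvesterMap B A X - sylvesterMap B A W := by
  simp only [sylvesterMap, Matrix.mul_sub, Matrix.sub_mul]
  abel

lemma sylvesterMap_smul_add_smul (c d : 𝕜) (B₁ B₂ : Matrix m m 𝕜) (A₁ A₂ : Matrix n n 𝕜)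
    (X : Matrix m n 𝕜) :
    sylvesterMap (c • B₁ + d • B₂) (c • A₁ + d • A₂) X =
      c • sylvesterMap B₁ A₁ X + d • sylvesterMap B₂ A₂ X := by
  simp only [sylvesterMap, Matrix.add_mul, Matrix.mul_add, Matrix.smul_mul, Matrix.mul_smul,
    smul_add]
  abel

lemma sylvesterMap_smul_right (B : Matrix m m 𝕜) (A : Matrix n n 𝕜) (c : 𝕜) (X : Matrix m n 𝕜) :
    sylvesterMap B (c • A) X = B * X + c • (X * A) := by
  rw [sylvesterMap, Matrix.mul_smul]

lemma re_trace_conjTranspose_mul_comm (X W : Matrix m n 𝕜) :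
    re (Xᴴ * W).trace = re (Wᴴ * X).trace := by
  rw [← conj_re, ← star_def, ← trace_conjTranspose, conjTranspose_mul, conjTranspose_conjTranspose]

lemma trace_conjTranspose_mul_sylvesterMap {B : Matrix m m 𝕜} {A : Matrix n n 𝕜}
    (hB : B.IsHermitian) (hA : A.IsHermitian) (W X : Matrix m n 𝕜) :
    (Wᴴ * sylvesterMap B A X).trace = ((sylvesterMap B A W)ᴴ * X).trace := by
  simp only [sylvesterMap, conjTranspose_add, conjTranspose_mul, hB.eq, hA.eq, Matrix.mul_add,
    Matrix.add_mul, trace_add, Matrix.mul_assoc]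
  rw [trace_mul_comm Wᴴ, trace_mul_comm A, ← Matrix.mul_assoc]

lemma re_trace_conjTranspose_mul_sylvesterMap_self_nonneg {B : Matrix m m 𝕜} {A : Matrix n n 𝕜}
    (hB : B.PosSemidef) (hA : A.PosSemidef) (X : Matrix m n 𝕜) :
    0 ≤ re (Xᴴ * sylvesterMap B A X).trace := by
  have hBX : 0 ≤ (Xᴴ * (B * X)).trace := by
    rw [← Matrix.mul_assoc]
    exact (hB.conjTranspose_mul_mul_same X).trace_nonneg
  have hAX : 0 ≤ (Xᴴ * (X * A)).trace := by
    rw [trace_mul_comm]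
    exact (hA.mul_mul_conjTranspose_same X).trace_nonneg
  rw [sylvesterMap, Matrix.mul_add, trace_add, map_add]
  exact add_nonneg (nonneg_iff.mp hBX).1 (nonneg_iff.mp hAX).1

theorem two_mul_re_trace_sub_le_of_sylvesterMap_eq {B : Matrix m m 𝕜} {A : Matrix n n 𝕜}
    (hB : B.PosSemidef) (hA : A.PosSemidef) {Y Z : Matrix m n 𝕜} (hZ : sylvesterMap B A Z = Y)
    (X : Matrix m n 𝕜) :
    2 * re (Yᴴ * X).trace - re (Xᴴ * sylvesterMap B A X).trace ≤ re (Yᴴ * Z).trace := by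
  have hpos := re_trace_conjTranspose_mul_sylvesterMap_self_nonneg hB hA (Z - X)
  have hsymm : (Zᴴ * sylvesterMap B A X).trace = (Yᴴ * X).trace := by
    rw [trace_conjTranspose_mul_sylvesterMap hB.isHermitian hA.isHermitian, hZ]
  rw [sylvesterMap_sub, hZ, conjTranspose_sub, Matrix.sub_mul, Matrix.mul_sub, Matrix.mul_sub,
    trace_sub, trace_sub, trace_sub, map_sub, map_sub, map_sub, hsymm,
    re_trace_conjTranspose_mul_comm Z, re_trace_conjTranspose_mul_comm X Y] at hpos
  linarith

theorem re_trace_conjTranspose_mul_le_of_sylvesterMap_convexCombination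
    {B₁ B₂ : Matrix m m 𝕜} {A₁ A₂ : Matrix n n 𝕜} (hB₁ : B₁.PosSemidef) (hB₂ : B₂.PosSemidef)
    (hA₁ : A₁.PosSemidef) (hA₂ : A₂.PosSemidef) {s : ℝ} (hs₀ : 0 ≤ s) (hs₁ : s ≤ 1)
    {Y Z₁ Z₂ Z : Matrix m n 𝕜} (hZ₁ : sylvesterMap B₁ A₁ Z₁ = Y)
    (hZ₂ : sylvesterMap B₂ A₂ Z₂ = Y)
    (hZ : sylvesterMap ((s : 𝕜) • B₁ + ((1 - s : ℝ) : 𝕜) • B₂)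
      ((s : 𝕜) • A₁ + ((1 - s : ℝ) : 𝕜) • A₂) Z = Y) :
    re (Yᴴ * Z).trace ≤ s * re (Yᴴ * Z₁).trace + (1 - s) * re (Yᴴ * Z₂).trace := by
  have h₁ := two_mul_re_trace_sub_le_of_sylvesterMap_eq hB₁ hA₁ hZ₁ Z
  have h₂ := two_mul_re_trace_sub_le_of_sylvesterMap_eq hB₂ hA₂ hZ₂ Z
  have hself : re (Zᴴ * sylvesterMap ((s : 𝕜) • B₁ + ((1 - s : ℝ) : 𝕜) • B₂)
      ((s : 𝕜) • A₁ + ((1 - s : ℝ) : 𝕜) • A₂) Z).trace = re (Yᴴ * Z).trace := by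
    rw [hZ, re_trace_conjTranspose_mul_comm]
  rw [sylvesterMap_smul_add_smul, Matrix.mul_add, Matrix.mul_smul, Matrix.mul_smul, trace_add,
    trace_smul, trace_smul, smul_eq_mul, smul_eq_mul, map_add, re_ofReal_mul,
    re_ofReal_mul] at hself
  linarith [mul_le_mul_of_nonneg_left h₁ hs₀, mul_le_mul_of_nonneg_left h₂ (sub_nonneg.2 hs₁)]

end Matrix

theorem resolvent_quadratic_form_jointly_convex_general {ι : Type*} [Fintype ι]
    (Y : Matrix ι ι ℂ) (t : ℝ) (ht : 0 < t)
    (A₁ A₂ B₁ B₂ : Matrix ι ι ℂ)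
    (hA₁ : A₁.PosDef) (hA₂ : A₂.PosDef) (hB₁ : B₁.PosDef) (hB₂ : B₂.PosDef)
    (s : ℝ) (hs : s ∈ Set.Ioo (0 : ℝ) 1)
    (Z₁ Z₂ Z : Matrix ι ι ℂ)
    (hZ₁ : B₁ * Z₁ + (t : ℂ) • (Z₁ * A₁) = Y)
    (hZ₂ : B₂ * Z₂ + (t : ℂ) • (Z₂ * A₂) = Y)
    (hZ : ((s : ℂ) • B₁ + ((1 - s : ℝ) : ℂ) • B₂) * Z +
        (t : ℂ) • (Z * ((s : ℂ) • A₁ + ((1 - s : ℝ) : ℂ) • A₂)) = Y) :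
    ((Yᴴ * Z).trace).re ≤ s * ((Yᴴ * Z₁).trace).re + (1 - s) * ((Yᴴ * Z₂).trace).re := by
  have ht' : (0 : ℂ) ≤ t := Complex.zero_le_real.2 ht.le
  rw [← sylvesterMap_smul_right] at hZ₁ hZ₂ hZ
  rw [smul_add, smul_comm (t : ℂ) (s : ℂ), smul_comm (t : ℂ) ((1 - s : ℝ) : ℂ)] at hZ
  exact re_trace_conjTranspose_mul_le_of_sylvesterMap_convexCombination hB₁.posSemidef
    hB₂.posSemidef (hA₁.posSemidef.smul ht') (hA₂.posSemidef.smul ht') hs.1.le hs.2.le hZ₁ hZ₂ hZ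

/-- Joint convexity of `(A,B) ↦ Tr(Y*(L_B + tR_A)⁻¹(Y))` over positive definite matrices:
with `Z_i` solving `B_i Z_i + t Z_i A_i = Y` and `Z` solving the equation for the convex
combination, the value `Tr(Y* Z) = ⟨Y, (L_B+tR_A)⁻¹Y⟩` is jointly convex. -/
theorem resolvent_quadratic_form_jointly_convex {ι : Type*} [Fintype ι] [DecidableEq ι]
    (Y : Matrix ι ι ℂ) (t : ℝ) (ht : 0 < t)
    (A₁ A₂ B₁ B₂ : Matrix ι ι ℂ)
    (hA₁ : A₁.PosDef) (hA₂ : A₂.PosDef) (hB₁ : B₁.PosDef) (hB₂ : B₂.PosDef)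
    (s : ℝ) (hs : s ∈ Set.Ioo (0 : ℝ) 1)
    (Z₁ Z₂ Z : Matrix ι ι ℂ)
    (hZ₁ : B₁ * Z₁ + (t : ℂ) • (Z₁ * A₁) = Y)
    (hZ₂ : B₂ * Z₂ + (t : ℂ) • (Z₂ * A₂) = Y)
    (hZ : ((s : ℂ) • B₁ + ((1 - s : ℝ) : ℂ) • B₂) * Z +
        (t : ℂ) • (Z * ((s : ℂ) • A₁ + ((1 - s : ℝ) : ℂ) • A₂)) = Y) :
    ((Yᴴ * Z).trace).re ≤ s * ((Yᴴ * Z₁).trace).re + (1 - s) * ((Yᴴ * Z₂).trace).re :=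
  resolvent_quadratic_form_jointly_convex_general Y t ht A₁ A₂ B₁ B₂ hA₁ hA₂ hB₁ hB₂ s hs Z₁ Z₂ Z
    hZ₁ hZ₂ hZ
end

section
/- Nonnegativity of WYD-type skew information: for p ∈ (0,1), an invertible density matrix ρ, and a self-adjoint matrix K, one has −Tr([K, ρ^p][K, ρ^{1−p}]) ≥ 0, where [A,B] = AB − BA. -/
/-!
Let `U` be the unitary whose columns are the `ψ j`, and `C = U⋆ K U`, a Hermitian matrix. Then
`ρ^p = U diag(λ^p) U⋆` and `ρ^{1-p} = U diag(λ^{1-p}) U⋆`, and conjugation by `U` preserves traces of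
products of commutators. Since `[C, diag a]_{ij} = (a_j - a_i) C_{ij}` and `C_{ji} = conj C_{ij}`,
`-Tr([C, diag a][C, diag b]) = ∑_{i,j} (a_i - a_j)(b_i - b_j) |C_{ij}|²`.
Every term is nonnegative because `λ ↦ λ^p` and `λ ↦ λ^{1-p}` are both increasing.
-/

open Matrix

/-- The rank-one operator `|v⟩⟨v|`. -/
noncomputable def outer {ι : Type*} [Fintype ι] (v : ι → ℂ) : Matrix ι ι ℂ :=
  Matrix.vecMulVec v (star v)

lemma Real.monovary_rpow {ι : Type*} {f : ι → ℝ} (hf : ∀ i, 0 ≤ f i) {p q : ℝ} (hp : 0 ≤ p)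
    (hq : 0 ≤ q) : Monovary (fun i => f i ^ p) (fun i => f i ^ q) := by
  intro i j hij
  have hf_lt : f i < f j := lt_of_not_ge fun hji => hij.not_ge (Real.rpow_le_rpow (hf j) hji hq)
  exact Real.rpow_le_rpow (hf i) hf_lt.le hp

namespace Matrix

variable {ι : Type*} [Fintype ι]

lemma sum_smul_outer_eq [DecidableEq ι] (f : ι → ℂ) (ψ : ι → ι → ℂ) :
    ∑ j, f j • outer (ψ j) = (of ψ)ᵀ * diagonal f * star (of ψ)ᵀ := by
  ext x y
  simp only [outer, sum_apply, smul_apply, vecMulVec_apply, mul_apply, diagonal_apply, mul_ite,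
    mul_zero, Finset.sum_ite_eq', Finset.mem_univ, if_true, transpose_apply, of_apply, star_apply,
    Pi.star_apply, smul_eq_mul]
  exact Finset.sum_congr rfl fun _ _ => by ring

lemma transpose_of_mem_unitaryGroup [DecidableEq ι] {ψ : ι → ι → ℂ}
    (hψ : ∀ i j, star (ψ i) ⬝ᵥ ψ j = if i = j then 1 else 0) :
    (of ψ)ᵀ ∈ unitaryGroup ι ℂ := by
  rw [mem_unitaryGroup_iff']
  ext i j
  simpa [mul_apply, one_apply, dotProduct] using hψ i j

lemma trace_conjStarAlgAut [DecidableEq ι] {R : Type*} [CommRing R] [StarRing R]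
    (u : unitaryGroup ι R) (X : Matrix ι ι R) :
    (Unitary.conjStarAlgAut R _ u X).trace = X.trace := by
  rw [Unitary.conjStarAlgAut_apply, trace_mul_cycle, Unitary.coe_star_mul_self, Matrix.one_mul]

lemma trace_commutator_mul_commutator_map {R F : Type*} [CommRing R]
    [FunLike F (Matrix ι ι R) (Matrix ι ι R)] [NonUnitalRingHomClass F (Matrix ι ι R) (Matrix ι ι R)]
    (φ : F) (hφ : ∀ X, (φ X).trace = X.trace) (C A B : Matrix ι ι R) :
    ((φ C * φ A - φ A * φ C) * (φ C * φ B - φ B * φ C)).trace =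
      ((C * A - A * C) * (C * B - B * C)).trace := by
  rw [← map_mul, ← map_mul, ← map_sub, ← map_mul, ← map_mul, ← map_sub, ← map_mul, hφ]

lemma commutator_diagonal_apply [DecidableEq ι] {R : Type*} [CommRing R] (C : Matrix ι ι R)
    (a : ι → R) (i j : ι) : (C * diagonal a - diagonal a * C) i j = (a j - a i) * C i j := by
  rw [sub_apply, mul_diagonal, diagonal_mul]
  ring

lemma trace_commutator_diagonal_mul_commutator_diagonal [DecidableEq ι] {C : Matrix ι ι ℂ}
    (hC : C.IsHermitian) (a b : ι → ℝ) :
    ((C * diagonal (fun i => (a i : ℂ)) - diagonal (fun i => (a i : ℂ)) * C) *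
        (C * diagonal (fun i => (b i : ℂ)) - diagonal (fun i => (b i : ℂ)) * C)).trace =
      ((-∑ i, ∑ j, (a i - a j) * (b i - b j) * Complex.normSq (C i j) : ℝ) : ℂ) := by
  simp only [trace, diag, mul_apply, commutator_diagonal_apply]
  push_cast
  rw [← Finset.sum_neg_distrib]
  refine Finset.sum_congr rfl fun i _ => ?_
  rw [← Finset.sum_neg_distrib]
  refine Finset.sum_congr rfl fun j _ => ?_
  have hCji : C j i = (starRingEnd ℂ) (C i j) := (hC.apply j i).symm
  rw [hCji, ← Complex.mul_conj]
  ring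

end Matrix

theorem wyd_skew_information_nonneg_general {ι : Type*} [Fintype ι] [DecidableEq ι]
    (p : ℝ) (hp : p ∈ Set.Ioo (0 : ℝ) 1)
    (ρp ρ1p K : Matrix ι ι ℂ) (hK : Kᴴ = K)
    (lam : ι → ℝ) (ψ : ι → ι → ℂ)
    (hψ : ∀ i j, star (ψ i) ⬝ᵥ ψ j = if i = j then 1 else 0)
    (hlam : ∀ j, 0 < lam j)
    (hρp : ρp = ∑ j, ((lam j ^ p : ℝ) : ℂ) • outer (ψ j))
    (hρ1p : ρ1p = ∑ j, ((lam j ^ (1 - p) : ℝ) : ℂ) • outer (ψ j)) :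
    0 ≤ (-(((K * ρp - ρp * K) * (K * ρ1p - ρ1p * K)).trace)).re ∧
      (((K * ρp - ρp * K) * (K * ρ1p - ρ1p * K)).trace).im = 0 := by
  let φ := Unitary.conjStarAlgAut ℂ (Matrix ι ι ℂ) ⟨_, transpose_of_mem_unitaryGroup hψ⟩
  have hρp_conj : ρp = φ (diagonal fun j => ((lam j ^ p : ℝ) : ℂ)) := by
    rw [hρp, sum_smul_outer_eq]; rfl
  have hρ1p_conj : ρ1p = φ (diagonal fun j => ((lam j ^ (1 - p) : ℝ) : ℂ)) := by
    rw [hρ1p, sum_smul_outer_eq]; rfl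
  obtain ⟨C, rfl⟩ : ∃ C, K = φ C := ⟨φ.symm K, (φ.apply_symm_apply K).symm⟩
  have hC : C.IsHermitian := φ.injective <| (map_star φ C).trans hK
  rw [hρp_conj, hρ1p_conj, trace_commutator_mul_commutator_map φ (trace_conjStarAlgAut _),
    trace_commutator_diagonal_mul_commutator_diagonal hC, ← Complex.ofReal_neg, neg_neg,
    Complex.ofReal_re, Complex.ofReal_im]
  have hmonovary := Real.monovary_rpow (fun j => (hlam j).le) hp.1.le (sub_nonneg.2 hp.2.le)
  exact ⟨Finset.sum_nonneg fun i _ => Finset.sum_nonneg fun j _ =>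
    mul_nonneg (hmonovary.sub_mul_sub_nonneg j i) (Complex.normSq_nonneg _), rfl⟩

/-- Nonnegativity of the Wigner–Yanase–Dyson-type skew information: for `p ∈ (0,1)`,
an invertible density matrix `ρ` (with spectral decomposition `ρ = Σ_j λ_j |ψ_j⟩⟨ψ_j|`,
so that `ρ^p = Σ_j λ_j^p |ψ_j⟩⟨ψ_j|`), and self-adjoint `K`, one has
`−Tr([K,ρ^p][K,ρ^{1−p}]) ≥ 0` (and this trace is real). -/
theorem wyd_skew_information_nonneg {ι : Type*} [Fintype ι] [DecidableEq ι]
    (p : ℝ) (hp : p ∈ Set.Ioo (0 : ℝ) 1)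
    (ρ ρp ρ1p K : Matrix ι ι ℂ) (hK : Kᴴ = K)
    (lam : ι → ℝ) (ψ : ι → ι → ℂ)
    (hψ : ∀ i j, star (ψ i) ⬝ᵥ ψ j = if i = j then 1 else 0)
    (hlam : ∀ j, 0 < lam j) (htr : ∑ j, lam j = 1)
    (hρ : ρ = ∑ j, (lam j : ℂ) • outer (ψ j))
    (hρp : ρp = ∑ j, ((lam j ^ p : ℝ) : ℂ) • outer (ψ j))
    (hρ1p : ρ1p = ∑ j, ((lam j ^ (1 - p) : ℝ) : ℂ) • outer (ψ j)) :
    0 ≤ (-(((K * ρp - ρp * K) * (K * ρ1p - ρ1p * K)).trace)).re ∧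
      (((K * ρp - ρp * K) * (K * ρ1p - ρ1p * K)).trace).im = 0 :=
  wyd_skew_information_nonneg_general p hp ρp ρ1p K hK lam ψ hψ hlam hρp hρ1p
end
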